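/- arXiv:1106.3370 — 8 statements merged into one kernel-verified Lean document; each statement's English description precedes it below -/
import Mathlib

section
/- Let V be a vector space over a field K, let L : V → V be a linear operator, and for each j = 1,…,m let f^j_1,…,f^j_{n_j} be a λ_j-chain of L (the scalars λ_1,…,λ_m ∈ K need not be distinct). If the eigenvectors f^1_{n_1}, f^2_{n_2}, …, f^m_{n_m} at the ends of the chains are linearly independent, then the whole collection {f^j_i : 1 ≤ j ≤ m, 1 ≤ i ≤ n_j} is linearly independent. -/
/-!
The vectors of a `μ`-chain lie in the generalized eigenspace of `μ`, and generalized eigenspaces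
of distinct eigenvalues are independent, so it suffices to treat chains sharing one eigenvalue `μ`.
Given a vanishing combination of those, pick a vector with nonzero coefficient at maximal distance
`k` from the end of its chain: `(L - μ)^k` kills every term except the ones at distance exactly
`k`, which it sends to the ends of their chains, contradicting the independence of the ends.
-/

namespace Module.End

variable {K V : Type*} [Field K] [AddCommGroup V] [Module K V]

def IsJordanChain (L : End K V) (μ : K) {n : ℕ} (f : Fin n → V) : Prop :=
  ∀ i : Fin n, L (f i) - μ • f i = if h : (i : ℕ) + 1 < n then f ⟨i + 1, h⟩ else 0

namespace IsJordanChain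

variable {L : End K V} {μ : K} {n : ℕ} {f : Fin n → V}

theorem pow_sub_smul_one_apply (hf : L.IsJordanChain μ f) (k : ℕ) (i : Fin n) :
    ((L - μ • 1) ^ k) (f i) = if h : (i : ℕ) + k < n then f ⟨i + k, h⟩ else 0 := by
  induction k generalizing i with
  | zero => simp
  | succ k ih =>
    rw [pow_succ, mul_apply, LinearMap.sub_apply, LinearMap.smul_apply, one_apply, hf i]
    split_ifs with h₁ h₂ h₂
    · simp only [ih, add_assoc, add_comm 1 k, h₂, dite_true]
    · rw [ih, dif_neg (by dsimp only; omega)]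
    · omega
    · exact map_zero _

theorem mem_maxGenEigenspace (hf : L.IsJordanChain μ f) (i : Fin n) :
    f i ∈ L.maxGenEigenspace μ :=
  (L.mem_maxGenEigenspace μ _).2 ⟨n, by rw [hf.pow_sub_smul_one_apply, dif_neg (by omega)]⟩

theorem pow_sub_smul_one_apply_of_le (hf : L.IsJordanChain μ f) (hn : 0 < n) {k : ℕ}
    {i : Fin n} (hk : n - 1 - i ≤ k) :
    ((L - μ • 1) ^ k) (f i) = if n - 1 - i = k then f ⟨n - 1, Nat.sub_lt hn one_pos⟩ else 0 := by
  rw [hf.pow_sub_smul_one_apply]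
  split_ifs with h₁ h₂ h₂
  · congr 2; omega
  · omega
  · omega
  · rfl

end IsJordanChain

theorem linearIndependent_sigma_of_isJordanChain {ι : Type*} {L : End K V} {μ : K} {n : ι → ℕ}
    {f : (j : ι) → Fin (n j) → V} (hf : ∀ j, L.IsJordanChain μ (f j)) (hn : ∀ j, 0 < n j)
    (hind : LinearIndependent K fun j => f j ⟨n j - 1, Nat.sub_lt (hn j) one_pos⟩) :
    LinearIndependent K fun p : Σ j, Fin (n j) => f p.1 p.2 := by
  classical
  set e := fun j => f j ⟨n j - 1, Nat.sub_lt (hn j) one_pos⟩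
  rw [linearIndependent_iff']
  intro s c hsum p hp
  by_contra hcp
  let depth : (Σ j, Fin (n j)) → ℕ := fun q => n q.1 - 1 - q.2
  obtain ⟨⟨j₀, i₀⟩, hp₀, hmax⟩ :=
    (s.filter (c · ≠ 0)).exists_max_image depth ⟨p, Finset.mem_filter.2 ⟨hp, hcp⟩⟩
  rw [Finset.mem_filter] at hp₀
  set k := depth ⟨j₀, i₀⟩
  have hterm : ∀ q ∈ s, c q • ((L - μ • 1) ^ k) (f q.1 q.2) =
      (if depth q = k then c q else 0) • e q.1 := by
    rintro ⟨j, i⟩ hq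
    by_cases hc : c ⟨j, i⟩ = 0
    · simp [hc]
    rw [(hf j).pow_sub_smul_one_apply_of_le (hn j) (hmax _ (Finset.mem_filter.2 ⟨hq, hc⟩))]
    split_ifs <;> simp [e]
  have hends : ∑ j ∈ s.image Sigma.fst,
      (∑ q ∈ s with q.1 = j, if depth q = k then c q else 0) • e j = 0 :=
    calc _ = ∑ j ∈ s.image Sigma.fst, ∑ q ∈ s with q.1 = j,
          (if depth q = k then c q else 0) • e q.1 := by
          refine Finset.sum_congr rfl fun j _ => ?_
          rw [Finset.sum_smul]
          exact Finset.sum_congr rfl fun q hq => by rw [(Finset.mem_filter.1 hq).2]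
      _ = ∑ q ∈ s, (if depth q = k then c q else 0) • e q.1 :=
          Finset.sum_fiberwise_of_maps_to (fun q hq => Finset.mem_image_of_mem _ hq) _
      _ = ((L - μ • 1) ^ k) (∑ q ∈ s, c q • f q.1 q.2) := by
          rw [← Finset.sum_congr rfl hterm]
          simp only [map_sum, map_smul]
      _ = 0 := by rw [hsum, map_zero]
  have hc₀ := linearIndependent_iff'.1 hind _ _ hends j₀ (Finset.mem_image_of_mem _ hp₀.1)
  rw [Finset.sum_eq_single_of_mem ⟨j₀, i₀⟩ (by simp [hp₀.1]) ?_, if_pos rfl] at hc₀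
  · exact hp₀.2 hc₀
  rintro ⟨j, i⟩ hq hne
  obtain ⟨-, rfl⟩ := Finset.mem_filter.1 hq
  refine if_neg fun hdepth => hne (congrArg _ (Fin.ext ?_))
  have : (i₀ : ℕ) < n j := i₀.isLt
  dsimp only [depth, k] at hdepth
  omega

end Module.End

theorem iSupIndep.linearIndependent_of_fibers {R M ι κ : Type*} [Ring R] [AddCommGroup M]
    [Module R M] {W : κ → Submodule R M} (hW : iSupIndep W) {φ : ι → κ} {v : ι → M}
    (hvW : ∀ i, v i ∈ W (φ i)) (hv : ∀ k, LinearIndependent R fun i : {i // φ i = k} => v i) :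
    LinearIndependent R v := by
  have hspan (k : κ) : Submodule.span R (Set.range fun i : {i // φ i = k} => v i) ≤ W k :=
    Submodule.span_le.2 <| Set.range_subset_iff.2 fun ⟨i, hi⟩ => hi ▸ hvW i
  rw [← linearIndependent_equiv (Equiv.sigmaFiberEquiv φ)]
  exact linearIndependent_iUnion_finite hv fun k t _ hk =>
    (hW.disjoint_biSup hk).mono (hspan k) (iSup₂_mono fun k' _ => hspan k')

theorem chains_with_independent_eigenvectors_linearIndependent_general
    (K V : Type*) [Field K] [AddCommGroup V] [Module K V]
    (L : V →ₗ[K] V) (m : ℕ) (n : Fin m → ℕ) (hn : ∀ j, 0 < n j)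
    (lam : Fin m → K) (f : (j : Fin m) → Fin (n j) → V)
    (hchain : ∀ (j : Fin m) (i : Fin (n j)),
      L (f j i) - lam j • f j i = if h : (i : ℕ) + 1 < n j then f j ⟨(i : ℕ) + 1, h⟩ else 0)
    (hind : LinearIndependent K (fun j : Fin m => f j ⟨n j - 1, Nat.sub_lt (hn j) one_pos⟩)) :
    LinearIndependent K (fun p : Σ j : Fin m, Fin (n j) => f p.1 p.2) := by
  have hf : ∀ j, Module.End.IsJordanChain L (lam j) (f j) := hchain
  refine (Module.End.independent_maxGenEigenspace L).linearIndependent_of_fibers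
    (fun p => (hf p.1).mem_maxGenEigenspace p.2) fun μ => ?_
  rw [← linearIndependent_equiv (Equiv.subtypeSigmaEquiv _ fun j => lam j = μ).symm]
  have hfμ : ∀ j : {j // lam j = μ}, Module.End.IsJordanChain L μ (f j) := by
    rintro ⟨j, rfl⟩
    exact hf j
  exact Module.End.linearIndependent_sigma_of_isJordanChain hfμ (fun j => hn j)
    (hind.comp Subtype.val Subtype.val_injective)

/-- If `L` is a linear operator on a vector space `V` over a field `K`, and for
each `j = 1, …, m` the vectors `f j 0, …, f j (n j - 1)` form a `λ j`-chain of `L` (nonzero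
vectors with `(L - λ j) (f j i) = f j (i+1)` and `(L - λ j)` of the last vector equal to `0`),
and if the eigenvectors at the ends of the chains are linearly independent, then the whole
collection of chain vectors is linearly independent. -/
theorem chains_with_independent_eigenvectors_linearIndependent
    (K V : Type*) [Field K] [AddCommGroup V] [Module K V]
    (L : V →ₗ[K] V) (m : ℕ) (n : Fin m → ℕ) (hn : ∀ j, 0 < n j)
    (lam : Fin m → K) (f : (j : Fin m) → Fin (n j) → V)
    (hne : ∀ j i, f j i ≠ 0)
    (hchain : ∀ (j : Fin m) (i : Fin (n j)),
      L (f j i) - lam j • f j i = if h : (i : ℕ) + 1 < n j then f j ⟨(i : ℕ) + 1, h⟩ else 0)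
    (hind : LinearIndependent K (fun j : Fin m => f j ⟨n j - 1, Nat.sub_lt (hn j) one_pos⟩)) :
    LinearIndependent K (fun p : Σ j : Fin m, Fin (n j) => f p.1 p.2) :=
  chains_with_independent_eigenvectors_linearIndependent_general K V L m n hn lam f hchain hind
end

section
/- Let λ, a_1, …, a_{k+1} ∈ ℂ and let A be the (k+1)×(k+1) complex matrix whose upper-left k×k block is the lower-triangular Jordan block J_k(λ), whose last column is zero except for the (k+1,k+1) entry a_{k+1}, and whose last row is (a_1, …, a_k, a_{k+1}). Then: (i) if a_{k+1} = λ and a_k ≠ 0, A is similar to the lower-triangular Jordan block J_{k+1}(λ); (ii) otherwise (i.e. if a_{k+1} ≠ λ or a_k = 0), A is similar to the block-diagonal matrix diag(J_k(λ), [a_{k+1}]) consisting of J_k(λ) and the 1×1 block [a_{k+1}]. -/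
/-- The `s × s` lower-triangular Jordan block with eigenvalue `lam`: diagonal entries `lam`,
entries `1` in positions `(i+1, i)`, all other entries `0`. -/
def jordanBlock (lam : ℂ) (s : ℕ) : Matrix (Fin s) (Fin s) ℂ :=
  Matrix.of fun i j => if (i : ℕ) = (j : ℕ) then lam else if (i : ℕ) = (j : ℕ) + 1 then 1 else 0

/-- Two square complex matrices are similar if `B = P * A * P⁻¹` for some invertible `P`. -/
def SimilarTo {m : Type*} [Fintype m] [DecidableEq m] (A B : Matrix m m ℂ) : Prop :=
  ∃ P : Matrix m m ℂ, IsUnit P.det ∧ B = P * A * P⁻¹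

/-!
Conjugating `[[J, 0], [r, d]]` by `[[1, 0], [c, s]]` keeps both diagonal blocks and turns the
row `r` into any `r'` with `r + d c = c J + s r'`. If `d ≠ λ`, then `J - d` is invertible and
`c = r (J - d)⁻¹` gives `r' = 0`. If `d = λ`, then `c J - λ c` is `c` shifted one place to the
left, so `c = (0, r₀, …, r_{k-2})` absorbs every entry of `r` except `r_{k-1}`; with `s = r_{k-1}`
the row becomes the last row of `J_{k+1}(λ)` when `r_{k-1} ≠ 0`, and it is already `0` otherwise.
-/

open Matrix

section Similarity

variable {m n : Type*} [Fintype m] [DecidableEq m] [Fintype n] [DecidableEq n]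

theorem similarTo_of_mul_eq_mul {A B Q : Matrix m m ℂ} (hQ : IsUnit Q.det) (h : A * Q = Q * B) :
    SimilarTo A B := by
  refine ⟨Q⁻¹, isUnit_nonsing_inv_det Q hQ, ?_⟩
  rw [nonsing_inv_nonsing_inv Q hQ, mul_assoc, h, ← mul_assoc, nonsing_inv_mul Q hQ, one_mul]

theorem SimilarTo.reindex {A B : Matrix m m ℂ} (e : m ≃ n) (h : SimilarTo A B) :
    SimilarTo (Matrix.reindex e e A) (Matrix.reindex e e B) := by
  obtain ⟨P, hP, rfl⟩ := h
  refine ⟨Matrix.reindex e e P, by rwa [det_reindex_self], ?_⟩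
  simp only [reindex_apply, inv_submatrix_equiv, submatrix_mul_equiv]

theorem similarTo_fromBlocks_zero₁₂ (J : Matrix m m ℂ) (D S : Matrix n n ℂ) (R R' C : Matrix n m ℂ)
    (hS : IsUnit S.det) (hDS : Commute D S) (hR : R + D * C = C * J + S * R') :
    SimilarTo (fromBlocks J 0 R D) (fromBlocks J 0 R' D) := by
  refine similarTo_of_mul_eq_mul (Q := fromBlocks 1 0 C S) ?_ ?_
  · rwa [det_fromBlocks_zero₁₂, det_one, one_mul]
  · simp only [fromBlocks_multiply, Matrix.mul_one, Matrix.one_mul, Matrix.mul_zero,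
      Matrix.zero_mul, add_zero, zero_add, hR, hDS.eq]

theorem similarTo_fromBlocks_row (J : Matrix m m ℂ) (d s : ℂ) (hs : s ≠ 0) (r r' c : m → ℂ)
    (h : r + d • c = c ᵥ* J + s • r') :
    SimilarTo (fromBlocks J 0 (of fun (_ : Fin 1) j => r j) (of fun _ _ => d))
      (fromBlocks J 0 (of fun (_ : Fin 1) j => r' j) (of fun _ _ => d)) := by
  refine similarTo_fromBlocks_zero₁₂ J _ (of fun _ _ => s) _ _ (of fun _ j => c j) ?_ ?_ ?_
  · simpa [det_fin_one] using hs
  · ext i j; simp [Matrix.mul_apply, mul_comm]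
  · ext i j
    simpa [Matrix.mul_apply, vecMul, dotProduct] using congrFun h j

end Similarity

section JordanBlock

variable (lam : ℂ) {k : ℕ}

theorem jordanBlock_add_smul_one (μ : ℂ) :
    jordanBlock lam k + μ • (1 : Matrix (Fin k) (Fin k) ℂ) = jordanBlock (lam + μ) k := by
  ext i j
  simp only [jordanBlock, Matrix.add_apply, Matrix.smul_apply, one_apply, of_apply, Fin.ext_iff,
    smul_eq_mul]
  split_ifs <;> ring

theorem jordanBlock_isLowerTriangular : (jordanBlock lam k).IsLowerTriangular := by
  intro i j hij
  have : (i : ℕ) < j := hij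
  simp only [jordanBlock, of_apply]
  split_ifs <;> first | rfl | omega

theorem det_jordanBlock : (jordanBlock lam k).det = lam ^ k := by
  rw [det_of_isLowerTriangular _ (jordanBlock_isLowerTriangular lam)]
  simp [jordanBlock]

theorem vecMul_jordanBlock (c : Fin k → ℂ) (j : Fin k) :
    (c ᵥ* jordanBlock lam k) j = lam * c j + if h : (j : ℕ) + 1 < k then c ⟨j + 1, h⟩ else 0 := by
  have entry (i : Fin k) : c i * jordanBlock lam k i j =
      if (i : ℕ) = j then c i * lam else if (i : ℕ) = j + 1 then c i else 0 := by
    simp only [jordanBlock, of_apply]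
    split_ifs <;> simp
  simp only [vecMul, dotProduct, entry]
  split_ifs with h
  · rw [Fintype.sum_eq_add j ⟨j + 1, h⟩ (by simp [Fin.ext_iff])]
    · simp [mul_comm]
    · rintro i ⟨hij, hij'⟩
      have hij : (i : ℕ) ≠ j := Fin.val_ne_iff.mpr hij
      have hij' : (i : ℕ) ≠ j + 1 := Fin.val_ne_iff.mpr hij'
      simp [hij, hij']
  · rw [Fintype.sum_eq_single j]
    · simp [mul_comm]
    · intro i hij
      have hij : (i : ℕ) ≠ j := Fin.val_ne_iff.mpr hij
      have : (i : ℕ) ≠ j + 1 := by omega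
      simp [hij, this]

theorem jordanBlock_succ :
    jordanBlock lam (k + 1) = Matrix.reindex finSumFinEquiv finSumFinEquiv
      (fromBlocks (jordanBlock lam k) 0
        (of fun (_ : Fin 1) (j : Fin k) => if (j : ℕ) + 1 = k then (1 : ℂ) else 0)
        (of fun _ _ => lam)) := by
  ext i j
  obtain ⟨p, rfl⟩ := finSumFinEquiv.surjective i
  obtain ⟨q, rfl⟩ := finSumFinEquiv.surjective j
  rw [reindex_apply, submatrix_apply, Equiv.symm_apply_apply, Equiv.symm_apply_apply]
  rcases p with p | p <;> rcases q with q | q <;>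
    simp only [finSumFinEquiv_apply_left, finSumFinEquiv_apply_right, fromBlocks_apply₁₁,
      fromBlocks_apply₁₂, fromBlocks_apply₂₁, fromBlocks_apply₂₂, jordanBlock, of_apply,
      Matrix.zero_apply, Fin.val_castAdd, Fin.val_natAdd, Fin.val_eq_zero] <;>
    split_ifs <;> first | rfl | omega

theorem similarTo_fromBlocks_jordanBlock_of_ne {d : ℂ} (hd : d ≠ lam) (r : Fin k → ℂ) :
    SimilarTo (fromBlocks (jordanBlock lam k) 0 (of fun (_ : Fin 1) j => r j) (of fun _ _ => d))
      (fromBlocks (jordanBlock lam k) 0 0 (of fun _ _ => d)) := by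
  set J' := jordanBlock (lam - d) k
  have hJ' : IsUnit J'.det := by
    rw [det_jordanBlock]
    exact (sub_ne_zero.2 hd.symm).isUnit.pow k
  have hJ : jordanBlock lam k = J' + d • 1 := by rw [jordanBlock_add_smul_one, sub_add_cancel]
  refine similarTo_fromBlocks_row _ d 1 one_ne_zero r 0 (r ᵥ* J'⁻¹) ?_
  rw [hJ, vecMul_add, vecMul_smul, vecMul_one, vecMul_vecMul, nonsing_inv_mul _ hJ', vecMul_one,
    smul_zero, add_zero, add_comm]

theorem similarTo_fromBlocks_jordanBlock_self (r r' : Fin k → ℂ) {s : ℂ} (hs : s ≠ 0)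
    (hr' : ∀ j : Fin k, s * r' j = if (j : ℕ) + 1 = k then r j else 0) :
    SimilarTo (fromBlocks (jordanBlock lam k) 0 (of fun (_ : Fin 1) j => r j) (of fun _ _ => lam))
      (fromBlocks (jordanBlock lam k) 0 (of fun (_ : Fin 1) j => r' j) (of fun _ _ => lam)) := by
  refine similarTo_fromBlocks_row _ lam s hs r r'
    (fun j => if h : 0 < (j : ℕ) then r ⟨j - 1, by omega⟩ else 0) ?_
  funext j
  simp only [Pi.add_apply, Pi.smul_apply, smul_eq_mul, vecMul_jordanBlock, hr']
  by_cases h : (j : ℕ) + 1 < k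
  · simp [h, h.ne, add_comm]
  · simp [show (j : ℕ) + 1 = k by omega, add_comm]

end JordanBlock

/-- Let `A` be the `(k+1) × (k+1)` matrix whose upper-left `k × k` block is the
lower-triangular Jordan block `J_k(λ)`, whose last column is zero except for the bottom-right
entry `a (Fin.last k)`, and whose last row is `(a 0, …, a k)`.  If the bottom-right entry is `λ`
and the entry of the last row in column `k` (1-indexed: `a_k`) is nonzero, then `A` is similar to
`J_{k+1}(λ)`; otherwise `A` is similar to the block-diagonal matrix `diag (J_k(λ), [a_{k+1}])`. -/
theorem jordan_extend_one_row (k : ℕ) (lam : ℂ) (a : Fin (k + 1) → ℂ)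
    (A : Matrix (Fin (k + 1)) (Fin (k + 1)) ℂ)
    (hA : A = Matrix.reindex finSumFinEquiv finSumFinEquiv
      (Matrix.fromBlocks (jordanBlock lam k) 0
        (Matrix.of fun (_ : Fin 1) (j : Fin k) => a j.castSucc)
        (Matrix.of fun (_ : Fin 1) (_ : Fin 1) => a (Fin.last k)))) :
    ((a (Fin.last k) = lam ∧ a ⟨k - 1, by omega⟩ ≠ 0) →
        SimilarTo A (jordanBlock lam (k + 1))) ∧
    ((a (Fin.last k) ≠ lam ∨ a ⟨k - 1, by omega⟩ = 0) →
        SimilarTo A (Matrix.reindex finSumFinEquiv finSumFinEquiv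
          (Matrix.fromBlocks (jordanBlock lam k) 0 0
            (Matrix.of fun (_ : Fin 1) (_ : Fin 1) => a (Fin.last k))))) := by
  subst hA
  have last_row_entry (j : Fin k) (hj : (j : ℕ) + 1 = k) : a j.castSucc = a ⟨k - 1, by omega⟩ :=
    congrArg a (Fin.ext (by simp; omega))
  refine ⟨fun ⟨hd, hs⟩ => ?_, fun h => ?_⟩
  · rw [jordanBlock_succ, hd]
    refine (similarTo_fromBlocks_jordanBlock_self lam _ _ hs fun j => ?_).reindex _
    split_ifs with hj
    · rw [last_row_entry j hj, mul_one]
    · rw [mul_zero]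
  by_cases hd : a (Fin.last k) = lam
  · have hs : a ⟨k - 1, by omega⟩ = 0 := h.resolve_left (not_not.2 hd)
    rw [hd]
    refine (similarTo_fromBlocks_jordanBlock_self lam _ 0 one_ne_zero fun j => ?_).reindex _
    split_ifs with hj
    · rw [last_row_entry j hj, hs, Pi.zero_apply, mul_zero]
    · rw [Pi.zero_apply, mul_zero]
  · exact (similarTo_fromBlocks_jordanBlock_of_ne lam hd _).reindex _
end

section
/- Let λ ∈ ℂ and let n ≤ k be positive integers. Let A be the (n+k+1)×(n+k+1) complex matrix whose upper-left (n+k)×(n+k) block is the block-diagonal matrix diag(J_n(λ), J_k(λ)), whose last column is zero except for the bottom entry λ, and whose last row has the entry 1 in columns n and n+k, the entry λ in column n+k+1, and 0 in all other positions. Then A is similar to the block-diagonal matrix diag(J_n(λ), J_{k+1}(λ)), i.e. to the direct sum of a λ-Jordan block of length n and a λ-Jordan block of length k+1. -/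
/-!
Write `A = B + E`, where `B = J_n(λ) ⊕ J_{k+1}(λ)` and `E` has the single entry `1` at
(0-indexed) position `(n+k, n-1)`. Let `S` be the nilpotent matrix `e_j ↦ e_{k+j}` for `j < n`
and `e_j ↦ 0` otherwise. Because `k ≥ n`, `S` maps into the span of `e_n, …, e_{n+k-1}`, so
`S² = 0` and `S E = 0`, while `B S - S B = E`. Hence `(1 + S) A = B (1 + S)` with
`(1 + S)⁻¹ = 1 - S`: in the basis `e_j - e_{k+j}` (`j < n`), `e_n, …, e_{n+k}` the matrix `A`
becomes `B`.
-/

open Matrix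

theorem similarTo_of_mul_eq_one {m : Type*} [Fintype m] [DecidableEq m]
    {A B P Q : Matrix m m ℂ} (hPQ : P * Q = 1) (hPA : P * A = B * P) : SimilarTo A B :=
  ⟨P, isUnit_det_of_right_inverse hPQ, by
    rw [inv_eq_right_inv hPQ, hPA, Matrix.mul_assoc, hPQ, Matrix.mul_one]⟩

theorem one_add_mul_one_sub_of_mul_self_eq_zero {R : Type*} [Ring R] {s : R} (hs : s * s = 0) :
    (1 + s) * (1 - s) = 1 := by
  rw [add_mul, one_mul, mul_sub, mul_one, hs, sub_zero, sub_add_cancel]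

theorem one_add_mul_add_eq_mul_one_add {R : Type*} [Ring R] {s b e : R} (hse : s * e = 0)
    (hcomm : b * s - s * b = e) : (1 + s) * (b + e) = b * (1 + s) := by
  subst hcomm
  calc (1 + s) * (b + (b * s - s * b)) = b * (1 + s) + s * (b * s - s * b) := by noncomm_ring
    _ = b * (1 + s) := by rw [hse, add_zero]

def shiftMatrix (n k N : ℕ) : Matrix (Fin N) (Fin N) ℂ :=
  of fun i j => if (i : ℕ) = k + j ∧ (j : ℕ) < n then 1 else 0

section

variable {n k N : ℕ}

theorem shiftMatrix_mul_of (f : ℕ → ℕ → ℂ) :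
    shiftMatrix n k N * of (fun i j : Fin N => f i j)
      = of fun i j : Fin N => if k ≤ (i : ℕ) ∧ (i : ℕ) < k + n then f (i - k) j else 0 := by
  ext i j
  simp only [mul_apply, shiftMatrix, of_apply, ite_mul, one_mul, zero_mul]
  split_ifs with h
  · rw [Fintype.sum_eq_single ⟨i - k, by omega⟩
      fun m hm => if_neg fun hm' => hm (Fin.ext (by simp only; omega))]
    rw [if_pos (by simp only; omega)]
  · exact Finset.sum_eq_zero fun m _ => if_neg (by omega)

theorem of_mul_shiftMatrix (hN : k + n ≤ N) (f : ℕ → ℕ → ℂ) :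
    of (fun i j : Fin N => f i j) * shiftMatrix n k N
      = of fun i j : Fin N => if (j : ℕ) < n then f i (k + j) else 0 := by
  ext i j
  simp only [mul_apply, shiftMatrix, of_apply, mul_ite, mul_one, mul_zero]
  split_ifs with h
  · rw [Fintype.sum_eq_single ⟨k + j, by omega⟩
      fun m hm => if_neg fun hm' => hm (Fin.ext hm'.1)]
    rw [if_pos ⟨rfl, h⟩]
  · exact Finset.sum_eq_zero fun m _ => if_neg (by omega)

theorem shiftMatrix_mul_self (hnk : n ≤ k) : shiftMatrix n k N * shiftMatrix n k N = 0 := by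
  ext i j
  rw [mul_apply, Matrix.zero_apply]
  refine Finset.sum_eq_zero fun m _ => ?_
  simp only [shiftMatrix, of_apply]
  split_ifs <;> first | omega | simp

theorem shiftMatrix_mul_single {i j : Fin N} (hi : n ≤ (i : ℕ)) (c : ℂ) :
    shiftMatrix n k N * Matrix.single i j c = 0 := by
  ext a b
  by_cases hb : b = j
  · subst hb
    rw [mul_single_apply_same, shiftMatrix, of_apply, if_neg (by omega), zero_mul,
      Matrix.zero_apply]
  · rw [mul_single_apply_of_ne _ _ _ _ _ hb, Matrix.zero_apply]

def jordanPairEntry (lam : ℂ) (n i j : ℕ) : ℂ :=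
  if i = j then lam else if i = j + 1 ∧ i ≠ n then 1 else 0

/-- `J_n(λ) ⊕ J_{N-n}(λ)`, written entrywise. -/
def jordanPair (lam : ℂ) (n N : ℕ) : Matrix (Fin N) (Fin N) ℂ :=
  of fun i j => jordanPairEntry lam n i j

theorem reindex_fromBlocks_jordanBlock (lam : ℂ) (r : ℕ) :
    reindex finSumFinEquiv finSumFinEquiv (fromBlocks (jordanBlock lam n) 0 0 (jordanBlock lam r))
      = jordanPair lam n (n + r) := by
  ext i j
  refine Fin.addCases (fun i => ?_) (fun i => ?_) i <;>
  refine Fin.addCases (fun j => ?_) (fun j => ?_) j <;>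
  simp only [reindex_apply, submatrix_apply, finSumFinEquiv_symm_apply_castAdd,
    finSumFinEquiv_symm_apply_natAdd, fromBlocks_apply₁₁, fromBlocks_apply₁₂, fromBlocks_apply₂₁,
    fromBlocks_apply₂₂, Matrix.zero_apply, of_apply, Fin.val_castAdd, Fin.val_natAdd,
    jordanBlock, jordanPair, jordanPairEntry] <;>
  split_ifs <;> first | rfl | omega

theorem reindex_fromBlocks_jordanPair_lastRow (lam : ℂ) (hn : 0 < n) (hk : 0 < k) :
    reindex finSumFinEquiv finSumFinEquiv
      (fromBlocks (jordanPair lam n (n + k)) 0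
        (of fun (_ : Fin 1) (j : Fin (n + k)) =>
          if (j : ℕ) = n - 1 ∨ (j : ℕ) = n + k - 1 then (1 : ℂ) else 0)
        (of fun (_ : Fin 1) (_ : Fin 1) => lam))
      = jordanPair lam n (n + k + 1)
          + Matrix.single ⟨n + k, by omega⟩ ⟨n - 1, by omega⟩ 1 := by
  ext i j
  refine Fin.addCases (fun i => ?_) (fun i => ?_) i <;>
  refine Fin.addCases (fun j => ?_) (fun j => ?_) j <;>
  have := i.isLt <;> have := j.isLt <;>
  simp only [reindex_apply, submatrix_apply, finSumFinEquiv_symm_apply_castAdd,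
    finSumFinEquiv_symm_apply_natAdd, fromBlocks_apply₁₁, fromBlocks_apply₁₂, fromBlocks_apply₂₁,
    fromBlocks_apply₂₂, Matrix.zero_apply, Matrix.add_apply, of_apply, Fin.val_castAdd,
    Fin.val_natAdd, jordanPair, jordanPairEntry, Matrix.single, Fin.ext_iff] <;>
  split_ifs <;> first | omega | simp

theorem jordanPair_mul_shiftMatrix_sub (lam : ℂ) (hn : 0 < n) (hnk : n ≤ k) (hN : n + k < N) :
    jordanPair lam n N * shiftMatrix n k N - shiftMatrix n k N * jordanPair lam n N
      = Matrix.single ⟨n + k, hN⟩ ⟨n - 1, by omega⟩ 1 := by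
  rw [jordanPair, of_mul_shiftMatrix (by omega), shiftMatrix_mul_of]
  ext i j
  simp only [Matrix.sub_apply, of_apply, Matrix.single, jordanPairEntry, Fin.ext_iff]
  split_ifs <;> first | omega | ring

end

/-- Let `1 ≤ n ≤ k` and let `A` be the `(n+k+1) × (n+k+1)` matrix whose
upper-left `(n+k) × (n+k)` block is `diag (J_n(λ), J_k(λ))`, whose last column is zero except
for the bottom entry `λ`, and whose last row has the entry `1` in columns `n` and `n+k`
(1-indexed), the entry `λ` in the last column, and `0` elsewhere.  Then `A` is similar to
`diag (J_n(λ), J_{k+1}(λ))`. -/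
theorem jordan_two_blocks_extend (n k : ℕ) (hn : 0 < n) (hnk : n ≤ k) (lam : ℂ)
    (A : Matrix (Fin (n + k + 1)) (Fin (n + k + 1)) ℂ)
    (hA : A = Matrix.reindex finSumFinEquiv finSumFinEquiv
      (Matrix.fromBlocks
        (Matrix.reindex finSumFinEquiv finSumFinEquiv
          (Matrix.fromBlocks (jordanBlock lam n) 0 0 (jordanBlock lam k)))
        0
        (Matrix.of fun (_ : Fin 1) (j : Fin (n + k)) =>
          if (j : ℕ) = n - 1 ∨ (j : ℕ) = n + k - 1 then (1 : ℂ) else 0)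
        (Matrix.of fun (_ : Fin 1) (_ : Fin 1) => lam))) :
    SimilarTo A (Matrix.reindex (finSumFinEquiv (m := n) (n := k + 1))
      (finSumFinEquiv (m := n) (n := k + 1))
      (Matrix.fromBlocks (jordanBlock lam n) 0 0 (jordanBlock lam (k + 1)))) := by
  have hk : 0 < k := by omega
  rw [hA, reindex_fromBlocks_jordanBlock, reindex_fromBlocks_jordanPair_lastRow lam hn hk,
    reindex_fromBlocks_jordanBlock]
  exact similarTo_of_mul_eq_one
    (one_add_mul_one_sub_of_mul_self_eq_zero (shiftMatrix_mul_self hnk))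
    (one_add_mul_add_eq_mul_one_add (shiftMatrix_mul_single le_self_add 1)
      (jordanPair_mul_shiftMatrix_sub lam hn hnk (Nat.lt_succ_self _)))
end

section
/- Let C be an n×n complex matrix, E an (N−n)×(N−n) complex matrix, D an (N−n)×n complex matrix, and let A be the N×N block lower-triangular matrix A = [[C, 0], [D, E]]. Then for every λ ∈ ℂ and every integer ℓ ≥ 1, dim ker((C − λ I_n)^ℓ) − dim ker((C − λ I_n)^{ℓ−1}) ≤ dim ker((A − λ I_N)^ℓ) − dim ker((A − λ I_N)^{ℓ−1}). (For any square matrix M, the quantity dim ker((M − λ)^ℓ) − dim ker((M − λ)^{ℓ−1}) is the number of Jordan blocks of M with eigenvalue λ and length at least ℓ; hence this inequality for all λ and ℓ is equivalent to the existence of an injection from the Jordan blocks of C into the Jordan blocks of A that preserves the eigenvalue and does not decrease the length.) -/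
/-!
Transposing turns `[[C, 0], [D, E]]` into a block upper-triangular matrix, for which the first
coordinate block `W` is an invariant subspace on which the matrix acts as `Cᵀ`; transposition does
not change kernel dimensions. Then `ker (Cᵀ - λ)^k ≅ W ⊓ ker (Aᵀ - λ)^k`, and for nested subspaces
`U₁ ≤ U₂` the modular law gives `dim (W ⊓ U₂) - dim (W ⊓ U₁) ≤ dim U₂ - dim U₁`.
-/

open Module LinearMap Matrix

namespace Submodule

variable {K V : Type*} [DivisionRing K] [AddCommGroup V] [Module K V] [FiniteDimensional K V]

theorem finrank_inf_add_finrank_le_of_le (W : Submodule K V) {U₁ U₂ : Submodule K V}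
    (h : U₁ ≤ U₂) :
    finrank K ↥(W ⊓ U₂) + finrank K U₁ ≤ finrank K U₂ + finrank K ↥(W ⊓ U₁) := by
  have hmodular := finrank_sup_add_finrank_inf_eq U₁ (W ⊓ U₂)
  have hinf : U₁ ⊓ (W ⊓ U₂) = W ⊓ U₁ := by
    rw [inf_left_comm, inf_eq_left.mpr h]
  have hsup : finrank K ↥(U₁ ⊔ W ⊓ U₂) ≤ finrank K U₂ :=
    finrank_mono (sup_le h inf_le_right)
  rw [hinf] at hmodular
  omega

end Submodule

namespace LinearMap

variable {K V W : Type*} [DivisionRing K] [AddCommGroup V] [Module K V]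
  [AddCommGroup W] [Module K W] {f : Module.End K V} {g : Module.End K W} {i : W →ₗ[K] V}

theorem map_ker_pow_eq_range_inf_ker_pow (hi : Function.Injective i) (h : f ∘ₗ i = i ∘ₗ g)
    (k : ℕ) : (ker (g ^ k)).map i = range i ⊓ ker (f ^ k) := by
  have hk := Module.End.commute_pow_left_of_commute h k
  ext v
  simp only [Submodule.mem_map, Submodule.mem_inf, mem_range, mem_ker]
  constructor
  · rintro ⟨w, hw, rfl⟩
    exact ⟨⟨w, rfl⟩, by rw [← comp_apply, hk, comp_apply, hw, map_zero]⟩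
  · rintro ⟨⟨w, rfl⟩, hw⟩
    refine ⟨w, hi ?_, rfl⟩
    rw [map_zero, ← comp_apply, ← hk, comp_apply, hw]

theorem finrank_ker_pow_succ_add_le_of_comp_eq [FiniteDimensional K V]
    (hi : Function.Injective i) (h : f ∘ₗ i = i ∘ₗ g) (k : ℕ) :
    finrank K (ker (g ^ (k + 1))) + finrank K (ker (f ^ k)) ≤
      finrank K (ker (f ^ (k + 1))) + finrank K (ker (g ^ k)) := by
  have hfinrank (j : ℕ) : finrank K (ker (g ^ j)) = finrank K ↥(range i ⊓ ker (f ^ j)) := by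
    rw [← map_ker_pow_eq_range_inf_ker_pow hi h,
      LinearEquiv.finrank_eq (Submodule.equivMapOfInjective i hi _)]
  rw [hfinrank, hfinrank]
  refine (range i).finrank_inf_add_finrank_le_of_le ?_
  rw [pow_succ', Module.End.mul_eq_comp]
  exact ker_le_ker_comp _ _

end LinearMap

namespace Matrix

variable {K ι κ : Type*} [Field K] [Fintype κ]

theorem finrank_ker_mulVecLin_add_rank (M : Matrix ι κ K) :
    finrank K (ker M.mulVecLin) + M.rank = Fintype.card κ := by
  rw [rank, add_comm, finrank_range_add_finrank_ker, finrank_fintype_fun_eq_card]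

variable [Fintype ι]

theorem finrank_ker_mulVecLin_transpose (M : Matrix ι ι K) :
    finrank K (ker Mᵀ.mulVecLin) = finrank K (ker M.mulVecLin) := by
  have h := M.finrank_ker_mulVecLin_add_rank
  have hT := Mᵀ.finrank_ker_mulVecLin_add_rank
  rw [rank_transpose] at hT
  omega

theorem finrank_ker_mulVecLin_reindex (e : ι ≃ κ) (M : Matrix ι ι K) :
    finrank K (ker (reindex e e M).mulVecLin) = finrank K (ker M.mulVecLin) := by
  have h := M.finrank_ker_mulVecLin_add_rank
  have he := (reindex e e M).finrank_ker_mulVecLin_add_rank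
  rw [rank_reindex, ← Fintype.card_congr e] at he
  omega

variable [DecidableEq ι] [DecidableEq κ]

theorem mulVecLin_pow (M : Matrix ι ι K) (k : ℕ) : (M ^ k).mulVecLin = M.mulVecLin ^ k := by
  rw [← toLin'_apply', toLin'_pow, toLin'_apply']

theorem finrank_ker_fromBlocks_zero₂₁_pow_succ_add_le (P : Matrix ι ι K) (Q : Matrix ι κ K)
    (R : Matrix κ κ K) (k : ℕ) :
    finrank K (ker (P ^ (k + 1)).mulVecLin) +
        finrank K (ker (fromBlocks P Q 0 R ^ k).mulVecLin) ≤
      finrank K (ker (fromBlocks P Q 0 R ^ (k + 1)).mulVecLin) +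
        finrank K (ker (P ^ k).mulVecLin) := by
  -- `simp` cannot rewrite here: the instance arguments of `finrank` depend on the kernel.
  rw [mulVecLin_pow, mulVecLin_pow, mulVecLin_pow, mulVecLin_pow]
  refine finrank_ker_pow_succ_add_le_of_comp_eq
    (i := (LinearEquiv.sumArrowLequivProdArrow ι κ K K).symm.toLinearMap ∘ₗ inl K _ _) ?_ ?_ k
  · rw [coe_comp]
    exact (LinearEquiv.injective _).comp (inl_injective (R := K))
  · refine LinearMap.ext fun x => funext fun j => ?_
    rcases j with j | j <;>
      simp [fromBlocks_mulVec, LinearEquiv.sumArrowLequivProdArrow, Equiv.sumArrowEquivProdArrow]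

theorem finrank_ker_fromBlocks_zero₁₂_pow_succ_add_le (C : Matrix ι ι K) (D : Matrix κ ι K)
    (E : Matrix κ κ K) (k : ℕ) :
    finrank K (ker (C ^ (k + 1)).mulVecLin) +
        finrank K (ker (fromBlocks C 0 D E ^ k).mulVecLin) ≤
      finrank K (ker (fromBlocks C 0 D E ^ (k + 1)).mulVecLin) +
        finrank K (ker (C ^ k).mulVecLin) := by
  rw [← finrank_ker_mulVecLin_transpose (C ^ (k + 1)), ← finrank_ker_mulVecLin_transpose (C ^ k),
    ← finrank_ker_mulVecLin_transpose (fromBlocks C 0 D E ^ k),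
    ← finrank_ker_mulVecLin_transpose (fromBlocks C 0 D E ^ (k + 1)), transpose_pow,
    transpose_pow, transpose_pow, transpose_pow, fromBlocks_transpose, transpose_zero]
  exact finrank_ker_fromBlocks_zero₂₁_pow_succ_add_le Cᵀ Dᵀ Eᵀ k

end Matrix

/-- For the block lower-triangular matrix `A = [[C, 0], [D, E]]` (with `C` of
size `n × n` and `E` of size `m × m`, so `A` has size `N × N` with `N = n + m`), for every
`λ ∈ ℂ` and every `ℓ ≥ 1`, the number of Jordan blocks of `C` with eigenvalue `λ` and length at
least `ℓ`, namely `dim ker (C - λ)^ℓ - dim ker (C - λ)^(ℓ-1)`, is at most the corresponding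
number for `A`. -/
theorem jordan_block_count_le_of_block_triangular (n m : ℕ)
    (C : Matrix (Fin n) (Fin n) ℂ) (E : Matrix (Fin m) (Fin m) ℂ)
    (D : Matrix (Fin m) (Fin n) ℂ)
    (A : Matrix (Fin (n + m)) (Fin (n + m)) ℂ)
    (hA : A = Matrix.reindex finSumFinEquiv finSumFinEquiv (Matrix.fromBlocks C 0 D E))
    (lam : ℂ) (ℓ : ℕ) (hℓ : 1 ≤ ℓ) :
    (Module.finrank ℂ ↥(LinearMap.ker (((C - lam • 1) ^ ℓ).mulVecLin)) : ℤ) -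
      (Module.finrank ℂ ↥(LinearMap.ker (((C - lam • 1) ^ (ℓ - 1)).mulVecLin)) : ℤ) ≤
    (Module.finrank ℂ ↥(LinearMap.ker (((A - lam • 1) ^ ℓ).mulVecLin)) : ℤ) -
      (Module.finrank ℂ ↥(LinearMap.ker (((A - lam • 1) ^ (ℓ - 1)).mulVecLin)) : ℤ) := by
  obtain ⟨k, rfl⟩ : ∃ k, ℓ = k + 1 := ⟨ℓ - 1, by omega⟩
  have hshift : A - lam • 1 = reindexAlgEquiv ℂ ℂ finSumFinEquiv
      (fromBlocks (C - lam • 1) 0 D (E - lam • 1)) := by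
    rw [hA, ← coe_reindexAlgEquiv ℂ ℂ, ← map_one (reindexAlgEquiv ℂ ℂ finSumFinEquiv), ← map_smul,
      ← map_sub]
    congr 1
    ext (i | i) (j | j) <;> simp [one_apply]
  have hblocks := finrank_ker_fromBlocks_zero₁₂_pow_succ_add_le (C - lam • 1) D (E - lam • 1) k
  rw [Nat.add_sub_cancel, hshift, ← map_pow, ← map_pow, coe_reindexAlgEquiv,
    finrank_ker_mulVecLin_reindex, finrank_ker_mulVecLin_reindex]
  omega
end

section
/- Let B be an invertible n×n complex matrix all of whose eigenvalues have modulus strictly less than 1, let k ≥ 2 be an integer, and let A be an n×n complex matrix satisfying A·B = B^k·A. Then A is not invertible (det A = 0). -/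
/-!
If `A` is invertible, taking determinants in `A * B = B ^ k * A` gives `det B ^ k = det B`.
But `det B` is the product of the (at least one, as `n > 0`) eigenvalues of `B`, so
`‖det B‖ < 1`, while `0 < ‖det B‖` as `B` is invertible; then `‖det B‖ ^ k < ‖det B‖` for `k ≥ 2`.
-/

namespace Matrix

variable {n : Type*} [Fintype n] [DecidableEq n]

theorem det_pow_eq_det_of_mul_eq_pow_mul {R : Type*} [CommRing R] {A B : Matrix n n R} {k : ℕ}
    (hA : IsUnit A.det) (h : A * B = B ^ k * A) : B.det ^ k = B.det := by
  have hdet := congrArg det h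
  rw [det_mul, det_mul, det_pow, mul_comm A.det] at hdet
  exact (hA.mul_right_cancel hdet).symm

theorem norm_det_lt_one_of_forall_isRoot_charpoly {𝕜 : Type*} [NormedField 𝕜] [IsAlgClosed 𝕜]
    [Nonempty n] (B : Matrix n n 𝕜) (h : ∀ μ : 𝕜, B.charpoly.IsRoot μ → ‖μ‖ < 1) :
    ‖B.det‖ < 1 := by
  have hroots : B.charpoly.roots ≠ 0 := by
    rw [← Multiset.card_pos, IsAlgClosed.card_roots_eq_natDegree, charpoly_natDegree_eq_dim]
    exact Fintype.card_pos
  obtain ⟨μ, hμ⟩ := Multiset.exists_mem_of_ne_zero hroots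
  obtain ⟨t, ht⟩ := Multiset.exists_cons_of_mem hμ
  have hnorm_lt : ∀ ν ∈ B.charpoly.roots, ‖ν‖ < 1 := fun ν hν =>
    h ν (Polynomial.isRoot_of_mem_roots hν)
  have ht_le : ‖t.prod‖ ≤ 1 := calc
    ‖t.prod‖ = (t.map (normHom : 𝕜 →*₀ ℝ)).prod := map_multiset_prod normHom t
    _ ≤ 1 ^ Multiset.card t := Multiset.prod_map_le_pow_card (fun ν _ => norm_nonneg ν)
      fun ν hν => (hnorm_lt ν (ht ▸ Multiset.mem_cons_of_mem hν)).le
    _ = 1 := one_pow _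
  rw [det_eq_prod_roots_charpoly, ht, Multiset.prod_cons, norm_mul]
  exact mul_lt_one_of_nonneg_of_lt_one_left (norm_nonneg _) (hnorm_lt μ hμ) ht_le

end Matrix

/-- If `B` is an invertible `n × n` complex matrix (`n ≥ 1`) all of whose
eigenvalues (roots of the characteristic polynomial) have modulus strictly less than `1`,
`k ≥ 2`, and `A * B = B ^ k * A`, then `A` is singular. -/
theorem not_invertible_of_semiconj_pow (n : ℕ) (hn : 0 < n)
    (B A : Matrix (Fin n) (Fin n) ℂ)
    (hB : IsUnit B.det)
    (heig : ∀ μ : ℂ, (Matrix.charpoly B).IsRoot μ → ‖μ‖ < 1)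
    (k : ℕ) (hk : 2 ≤ k)
    (hAB : A * B = B ^ k * A) :
    A.det = 0 := by
  by_contra hA
  have : Nonempty (Fin n) := ⟨⟨0, hn⟩⟩
  have hpow := Matrix.det_pow_eq_det_of_mul_eq_pow_mul (Ne.isUnit hA) hAB
  have hlt := Matrix.norm_det_lt_one_of_forall_isRoot_charpoly B heig
  have hpos : 0 < ‖B.det‖ := norm_pos_iff.2 hB.ne_zero
  have hshrink := pow_lt_self_of_lt_one₀ hpos hlt hk
  rw [← norm_pow, hpow] at hshrink
  exact lt_irrefl _ hshrink
end

section
/- Let H be a separable infinite-dimensional complex Hilbert space with a Hilbert basis (e_i)_{i∈ℕ}, and let C : H → H be a compact linear operator that is lower triangular with respect to this basis, i.e. ⟨C e_j, e_i⟩ = 0 whenever i < j. Fix N ∈ ℕ, let H₁ be the span of e_0,…,e_{N−1} and H₂ the closed span of {e_i : i ≥ N} (lower triangularity makes H₂ invariant under C), let P be the orthogonal projection of H onto H₁, and let U : H₁ → H₁ be the compression U x = P(C x). Let λ ∈ ℂ with λ ≠ 0 and suppose ‖C|_{H₂}‖ < |λ|, where C|_{H₂} is the restriction of C to H₂. Then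 the map x ↦ P x restricts to a linear bijection from ker(C − λ I) onto ker(U − λ id_{H₁}); in particular, every x₁ ∈ ker(U − λ id_{H₁}) has a unique completion x ∈ ker(C − λ I) with P x = x₁. -/
/-!
`H₂ = ker P` is invariant under `C`, and `‖C|_{H₂}‖ < |λ|` puts `λ` outside the spectrum of
`C|_{H₂}`, so `λ - C` is a bijection of `H₂`. Injectivity on `H₂` says an eigenvector is
determined by its `H₁`-component. Conversely, if `y ∈ H₁` satisfies `P (C y) = λ y`, then
`(1 - P) C y ∈ H₂`, and with `z ∈ H₂` solving `(λ - C) z = (1 - P) C y` the vector `y + z` is an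
eigenvector projecting to `y`.
-/

open Set Submodule
open scoped InnerProductSpace

namespace ContinuousLinearMap

variable {𝕜 E : Type*} [NontriviallyNormedField 𝕜] [NormedAddCommGroup E] [NormedSpace 𝕜 E]

theorem bijective_smul_one_sub_of_norm_lt [CompleteSpace E] {T : E →L[𝕜] E} {k : 𝕜}
    (h : ‖T‖ < ‖k‖) : Function.Bijective (k • 1 - T : E →L[𝕜] E) := by
  have hk : IsUnit (algebraMap 𝕜 (E →L[𝕜] E) k - T) :=
    spectrum.mem_resolventSet_of_norm_lt_mul <|
      (mul_le_of_le_one_right (norm_nonneg T) norm_id_le).trans_lt h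
  rw [Algebra.algebraMap_eq_smul_one] at hk
  exact isUnit_iff_bijective.mp hk

variable {P C : E →L[𝕜] E} {k : 𝕜}

theorem apply_apply_of_isIdempotentElem (hP : IsIdempotentElem P) (x : E) : P (P x) = P x :=
  congr($hP.eq x)

theorem sub_apply_mem_ker_of_isIdempotentElem (hP : IsIdempotentElem P) (x : E) :
    x - P x ∈ P.ker := by
  simp [apply_apply_of_isIdempotentElem hP]

theorem mapsTo_eigenvectors_of_isIdempotentElem (hP : IsIdempotentElem P)
    (hC : ∀ z ∈ P.ker, C z ∈ P.ker) :
    MapsTo P {x | C x = k • x} {y | P y = y ∧ P (C y) = k • y} := by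
  intro x (hx : C x = k • x)
  refine ⟨apply_apply_of_isIdempotentElem hP x, ?_⟩
  have h : P (C (x - P x)) = 0 := hC _ (sub_apply_mem_ker_of_isIdempotentElem hP x)
  rw [map_sub, map_sub, hx, map_smul, sub_eq_zero] at h
  exact h.symm

theorem injOn_eigenvectors_of_injective_restrict (hC : ∀ z ∈ P.ker, C z ∈ P.ker)
    (hinj : Function.Injective (k • 1 - C.restrict hC : P.ker →L[𝕜] P.ker)) :
    InjOn P {x | C x = k • x} := by
  intro x (hx : C x = k • x) x' (hx' : C x' = k • x') hPx
  have hd : x - x' ∈ P.ker := by simp [hPx]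
  have : (k • 1 - C.restrict hC) ⟨x - x', hd⟩ = 0 := by
    ext
    simp [hx, hx', smul_sub]
  simpa [sub_eq_zero] using congr(Subtype.val $(hinj (this.trans (map_zero _).symm)))

theorem surjOn_eigenvectors_of_surjective_restrict (hP : IsIdempotentElem P)
    (hC : ∀ z ∈ P.ker, C z ∈ P.ker)
    (hsurj : Function.Surjective (k • 1 - C.restrict hC : P.ker →L[𝕜] P.ker)) :
    SurjOn P {x | C x = k • x} {y | P y = y ∧ P (C y) = k • y} := by
  rintro y ⟨hPy, hy⟩
  obtain ⟨z, hz⟩ := hsurj ⟨C y - P (C y), sub_apply_mem_ker_of_isIdempotentElem hP _⟩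
  have hz' : k • (z : E) - C z = C y - P (C y) := by simpa using congr(Subtype.val $hz)
  refine ⟨y + z, ?_, ?_⟩
  · change C (y + z) = k • (y + z)
    rw [map_add]
    linear_combination (norm := module) hy - hz'
  · simp [hPy]

theorem bijOn_eigenvectors_of_norm_restrict_lt [CompleteSpace E] (hP : IsIdempotentElem P)
    (hC : ∀ z ∈ P.ker, C z ∈ P.ker) (hnorm : ‖C.restrict hC‖ < ‖k‖) :
    BijOn P {x | C x = k • x} {y | P y = y ∧ P (C y) = k • y} :=
  have hbij := bijective_smul_one_sub_of_norm_lt hnorm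
  ⟨mapsTo_eigenvectors_of_isIdempotentElem hP hC,
    injOn_eigenvectors_of_injective_restrict hC hbij.1,
    surjOn_eigenvectors_of_surjective_restrict hP hC hbij.2⟩

end ContinuousLinearMap

section Orthonormal

variable {ι 𝕜 E : Type*} [RCLike 𝕜] [NormedAddCommGroup E] [InnerProductSpace 𝕜 E]

theorem Submodule.mem_orthogonal_span_iff {S : Set E} {y : E} :
    y ∈ (span 𝕜 S)ᗮ ↔ ∀ u ∈ S, ⟪u, y⟫_𝕜 = 0 := by
  rw [← span_singleton_le_iff_mem, ← isOrtho_iff_le, isOrtho_comm, isOrtho_span]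
  simp

theorem Orthonormal.starProjection_span_image_finset {v : ι → E} (hv : Orthonormal 𝕜 v)
    (s : Finset ι) [(span 𝕜 (v '' s)).HasOrthogonalProjection] :
    (span 𝕜 (v '' s)).starProjection = ∑ i ∈ s, (innerSL 𝕜 (v i)).smulRight (v i) := by
  ext x
  simp only [FunLike.coe_sum, Finset.sum_apply, ContinuousLinearMap.smulRight_apply,
    innerSL_apply_apply]
  refine eq_starProjection_of_mem_orthogonal
    (sum_mem fun i hi => smul_mem _ _ (subset_span (mem_image_of_mem v hi))) ?_
  rw [mem_orthogonal_span_iff]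
  rintro _ ⟨j, hj, rfl⟩
  rw [inner_sub_right, hv.inner_right_sum _ hj, sub_self]

namespace HilbertBasis

variable (b : HilbertBasis ι 𝕜 E)

theorem topologicalClosure_span_image_compl (s : Set ι) :
    (span 𝕜 (b '' sᶜ)).topologicalClosure = (span 𝕜 (b '' s))ᗮ := by
  refine le_antisymm (topologicalClosure_minimal _ ?_ (isClosed_orthogonal _)) fun x hx => ?_
  · rw [← isOrtho_iff_le, isOrtho_span]
    rintro _ ⟨j, hj, rfl⟩ _ ⟨i, hi, rfl⟩
    exact b.orthonormal.inner_eq_zero fun h => hj (h ▸ hi)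
  · refine (isClosed_topologicalClosure _).mem_of_tendsto (b.hasSum_repr x)
      (.of_forall fun t => sum_mem fun i _ => ?_)
    by_cases hi : i ∈ s
    · rw [b.repr_apply_apply,
        inner_right_of_mem_orthogonal (subset_span (mem_image_of_mem _ hi)) hx, zero_smul]
      exact zero_mem _
    · exact smul_mem _ _ (le_topologicalClosure _ (subset_span (mem_image_of_mem _ hi)))

theorem mapsTo_orthogonal_span_image {C : E →L[𝕜] E} {s : Set ι}
    (hC : ∀ i ∈ s, ∀ j ∉ s, ⟪C (b j), b i⟫_𝕜 = 0) :
    MapsTo C (span 𝕜 (b '' s))ᗮ (span 𝕜 (b '' s))ᗮ := by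
  intro z hz
  rw [← b.topologicalClosure_span_image_compl] at hz
  refine topologicalClosure_minimal (span 𝕜 (b '' sᶜ))
    (t := (span 𝕜 (b '' s))ᗮ.comap (C : E →ₗ[𝕜] E)) ?_
    ((isClosed_orthogonal _).preimage C.continuous) hz
  rw [span_le]
  rintro _ ⟨j, hj, rfl⟩
  rw [SetLike.mem_coe, mem_comap, mem_orthogonal_span_iff]
  rintro _ ⟨i, hi, rfl⟩
  exact inner_eq_zero_symm.mp (hC i hi j hj)

end HilbertBasis

end Orthonormal

open scoped ComplexInnerProductSpace

theorem projection_bijOn_kernels_general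
    {H : Type*} [NormedAddCommGroup H] [InnerProductSpace ℂ H] [CompleteSpace H]
    (e : HilbertBasis ℕ ℂ H) (C : H →L[ℂ] H)
    (htri : ∀ i j : ℕ, i < j → ⟪C (e j), e i⟫ = 0)
    (N : ℕ)
    (P : H →L[ℂ] H)
    (hP : P = ∑ i ∈ Finset.range N, (innerSL ℂ (e i)).smulRight (e i))
    (lam : ℂ) (hlam : lam ≠ 0)
    (hW : ∃ r : ℝ, r < ‖lam‖ ∧
      ∀ x ∈ (Submodule.span ℂ (⇑e '' {i : ℕ | N ≤ i})).topologicalClosure, ‖C x‖ ≤ r * ‖x‖) :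
    Set.BijOn (⇑P) {x : H | C x = lam • x}
      {y : H | y ∈ Submodule.span ℂ (⇑e '' {i : ℕ | i < N}) ∧ P (C y) = lam • y} ∧
    ∀ y : H, y ∈ Submodule.span ℂ (⇑e '' {i : ℕ | i < N}) → P (C y) = lam • y →
      ∃! x : H, C x = lam • x ∧ P x = y := by
  obtain ⟨r, hr, hbound⟩ := hW
  rw [show {i : ℕ | i < N} = ↑(Finset.range N) from (Finset.coe_range N).symm]
  rw [show {i : ℕ | N ≤ i} = (↑(Finset.range N))ᶜ by ext; simp] at hbound
  set K := span ℂ (e '' ↑(Finset.range N))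
  have : FiniteDimensional ℂ K :=
    FiniteDimensional.span_of_finite ℂ ((Finset.range N).finite_toSet.image e)
  have hPK : P = K.starProjection :=
    hP.trans (e.orthonormal.starProjection_span_image_finset _).symm
  have hker : P.ker = (span ℂ (e '' (↑(Finset.range N))ᶜ)).topologicalClosure := by
    rw [hPK, ker_starProjection, e.topologicalClosure_span_image_compl]
  have hC : ∀ z ∈ P.ker, C z ∈ P.ker := by
    rw [hPK, ker_starProjection]
    exact e.mapsTo_orthogonal_span_image fun i hi j hj =>
      htri i j ((Finset.mem_range.mp hi).trans_le (by simpa using hj))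
  have hnorm : ‖C.restrict hC‖ < ‖lam‖ := by
    refine ((C.restrict hC).opNorm_le_bound (le_max_right r 0) fun z => ?_).trans_lt
      (max_lt hr (norm_pos_iff.mpr hlam))
    exact (hbound z (hker ▸ z.2)).trans
      (mul_le_mul_of_nonneg_right (le_max_left r 0) (norm_nonneg _))
  have hbij := ContinuousLinearMap.bijOn_eigenvectors_of_norm_restrict_lt
    (hPK ▸ K.isIdempotentElem_starProjection) hC hnorm
  simp only [hPK, starProjection_eq_self_iff] at hbij
  rw [hPK]
  refine ⟨hbij, fun y hy hCy => ?_⟩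
  obtain ⟨x, hx, rfl⟩ := hbij.surjOn ⟨hy, hCy⟩
  exact ⟨x, ⟨hx, rfl⟩, fun x' hx' => hbij.injOn hx'.1 hx hx'.2⟩

/-- Let `C` be a compact operator on a separable infinite-dimensional complex
Hilbert space `H`, lower triangular with respect to a Hilbert basis `(e_i)_{i ∈ ℕ}`.  Fix `N`,
let `H₁` be the span of `e_0, …, e_{N-1}`, `H₂` the closed span of `{e_i : i ≥ N}`, `P` the
orthogonal projection onto `H₁` (given by `P x = ∑_{i < N} ⟪e_i, x⟫ e_i`), and
`U : H₁ → H₁` the compression `U x = P (C x)`.  If `λ ≠ 0` and `‖C|_{H₂}‖ < |λ|` (i.e. there is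
`r < |λ|` with `‖C x‖ ≤ r ‖x‖` for all `x ∈ H₂`), then `x ↦ P x` is a bijection from
`ker (C - λ I)` onto `ker (U - λ id_{H₁}) = {y ∈ H₁ : P (C y) = λ y}`; in particular every
element of the latter kernel has a unique completion in `ker (C - λ I)`. -/
theorem projection_bijOn_kernels
    {H : Type*} [NormedAddCommGroup H] [InnerProductSpace ℂ H] [CompleteSpace H]
    (e : HilbertBasis ℕ ℂ H) (C : H →L[ℂ] H)
    (hcpt : IsCompactOperator (⇑C))
    (htri : ∀ i j : ℕ, i < j → ⟪C (e j), e i⟫ = 0)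
    (N : ℕ)
    (P : H →L[ℂ] H)
    (hP : P = ∑ i ∈ Finset.range N, (innerSL ℂ (e i)).smulRight (e i))
    (lam : ℂ) (hlam : lam ≠ 0)
    (hW : ∃ r : ℝ, r < ‖lam‖ ∧
      ∀ x ∈ (Submodule.span ℂ (⇑e '' {i : ℕ | N ≤ i})).topologicalClosure, ‖C x‖ ≤ r * ‖x‖) :
    Set.BijOn (⇑P) {x : H | C x = lam • x}
      {y : H | y ∈ Submodule.span ℂ (⇑e '' {i : ℕ | i < N}) ∧ P (C y) = lam • y} ∧
    ∀ y : H, y ∈ Submodule.span ℂ (⇑e '' {i : ℕ | i < N}) → P (C y) = lam • y →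
      ∃! x : H, C x = lam • x ∧ P x = y :=
  projection_bijOn_kernels_general e C htri N P hP lam hlam hW
end

section
/- Let φ : 𝔹ⁿ → 𝔹ⁿ be an analytic map with φ(0) = 0, whose derivative φ'(0) (identified with an n×n complex matrix) is invertible, and which is not unitary on any slice, i.e. ‖φ(z)‖ < ‖z‖ for every z ∈ 𝔹ⁿ with z ≠ 0. Let k ≥ 2 be an integer. Then every analytic map F : 𝔹ⁿ → ℂⁿ satisfying F(φ(z)) = φ'(0)^k F(z) for all z ∈ 𝔹ⁿ has non-invertible derivative at 0, i.e. the matrix F'(0) is singular; in particular no such F can have full rank near 0. -/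
/-!
Differentiating `F ∘ φ = A ^ k ∘ F` at the fixed point `0`, where `A = φ'(0)`, gives
`F'(0) A = A ^ k F'(0)`. If `F'(0)` were invertible, `A` would be similar to `A ^ k`, so the
eigenvalues of `A` would be closed under `μ ↦ μ ^ k`. They are nonzero since `A` is invertible,
and of modulus `< 1` by the Schwarz lemma, since `‖φ z‖ < ‖z‖` forces `‖A‖ < 1`. Any eigenvalue
`μ` would then produce the infinitely many distinct eigenvalues `μ ^ k ^ m`.
-/

open Metric

theorem fderiv_comp_eq_of_eventuallyEq_comp {𝕜 E G : Type*} [NontriviallyNormedField 𝕜]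
    [NormedAddCommGroup E] [NormedSpace 𝕜 E] [NormedAddCommGroup G] [NormedSpace 𝕜 G]
    {φ : E → E} {F : E → G} {L : G →L[𝕜] G} {x : E} (hφ : DifferentiableAt 𝕜 φ x)
    (hF : DifferentiableAt 𝕜 F x) (hfix : φ x = x) (heq : F ∘ φ =ᶠ[nhds x] L ∘ F) :
    (fderiv 𝕜 F x).comp (fderiv 𝕜 φ x) = L.comp (fderiv 𝕜 F x) := by
  have hFφ : HasFDerivAt F (fderiv 𝕜 F x) (φ x) := by rw [hfix]; exact hF.hasFDerivAt
  exact (hFφ.comp x hφ.hasFDerivAt).unique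
    ((L.hasFDerivAt.comp x hF.hasFDerivAt).congr_of_eventuallyEq heq)

/-- By compactness, `‖f‖` stays below some `M < r / 2` on `closedBall 0 (r / 2)`, and the Schwarz
lemma on `ball 0 (r / 2)` then gives `‖f'(0)‖ ≤ 2 M / r`. -/
theorem norm_fderiv_lt_one_of_norm_lt_norm {E F : Type*} [NormedAddCommGroup E]
    [NormedSpace ℂ E] [ProperSpace E] [NormedAddCommGroup F] [NormedSpace ℂ F] {f : E → F}
    {r : ℝ} (hr : 0 < r) (hd : DifferentiableOn ℂ f (ball 0 r)) (hf0 : f 0 = 0)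
    (hlt : ∀ z ∈ ball (0 : E) r, z ≠ 0 → ‖f z‖ < ‖z‖) : ‖fderiv ℂ f 0‖ < 1 := by
  have hsub : closedBall (0 : E) (r / 2) ⊆ ball 0 r := closedBall_subset_ball (by linarith)
  obtain ⟨z₀, hz₀, hmax⟩ := (isCompact_closedBall (0 : E) (r / 2)).exists_isMaxOn
    (nonempty_closedBall.2 (by positivity)) (hd.continuousOn.mono hsub).norm
  have hM : ‖f z₀‖ < r / 2 := by
    rcases eq_or_ne z₀ 0 with rfl | hz₀0
    · rw [hf0, norm_zero]; positivity
    · exact (hlt z₀ (hsub hz₀) hz₀0).trans_le (mem_closedBall_zero_iff.1 hz₀)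
  have hmaps : Set.MapsTo f (ball 0 (r / 2)) (closedBall (f 0) ‖f z₀‖) := fun z hz ↦ by
    rw [hf0, mem_closedBall_zero_iff]
    exact hmax (ball_subset_closedBall hz)
  calc ‖fderiv ℂ f 0‖ ≤ ‖f z₀‖ / (r / 2) :=
        Complex.norm_fderiv_le_div_of_mapsTo_ball (hd.mono (ball_subset_ball (by linarith)))
          hmaps (by positivity)
    _ < 1 := (div_lt_one (by positivity)).2 hM

theorem ContinuousLinearMap.norm_le_opNorm_of_hasEigenvalue {𝕜 E : Type*}
    [NontriviallyNormedField 𝕜] [NormedAddCommGroup E] [NormedSpace 𝕜 E] (A : E →L[𝕜] E)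
    {μ : 𝕜} (hμ : Module.End.HasEigenvalue (A : E →ₗ[𝕜] E) μ) : ‖μ‖ ≤ ‖A‖ := by
  obtain ⟨v, hv⟩ := hμ.exists_hasEigenvector
  refine le_of_mul_le_mul_right ?_ (norm_pos_iff.2 hv.2)
  calc ‖μ‖ * ‖v‖ = ‖A v‖ := by rw [← norm_smul, ← hv.apply_eq_smul]; rfl
    _ ≤ ‖A‖ * ‖v‖ := A.le_opNorm v

namespace Module.End

theorem HasEigenvalue.of_semiconj {R M : Type*} [CommRing R] [AddCommGroup M] [Module R M]
    {f g B : End R M} (hB : Function.Bijective B) (hconj : ∀ v, B (f v) = g (B v)) {μ : R}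
    (hμ : g.HasEigenvalue μ) : f.HasEigenvalue μ := by
  obtain ⟨v, hv⟩ := hμ.exists_hasEigenvector
  obtain ⟨w, rfl⟩ := hB.2 v
  refine hasEigenvalue_of_hasEigenvector (x := w) ⟨mem_eigenspace_iff.2 (hB.1 ?_), ?_⟩
  · rw [hconj, hv.apply_eq_smul, map_smul]
  · rintro rfl
    exact hv.2 (map_zero B)

theorem not_hasEigenvalue_of_forall_pow {K V : Type*} [NormedField K] [AddCommGroup V]
    [Module K V] [FiniteDimensional K V] {f : End K V} {k : ℕ} (hk : 2 ≤ k)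
    (hpow : ∀ μ, f.HasEigenvalue μ → f.HasEigenvalue (μ ^ k)) {μ : K} (hμ0 : μ ≠ 0)
    (hμ1 : ‖μ‖ < 1) : ¬ f.HasEigenvalue μ := by
  intro hμ
  have hiter : ∀ m, f.HasEigenvalue (μ ^ k ^ m) := by
    intro m
    induction m with
    | zero => simpa using hμ
    | succ m ih => simpa [pow_succ, pow_mul] using hpow _ ih
  have hinj : Function.Injective fun m : ℕ ↦ μ ^ k ^ m := by
    refine StrictAnti.injective (f := fun m : ℕ ↦ ‖μ ^ k ^ m‖) (fun a b hab ↦ ?_) |>.of_comp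
    simp only [norm_pow]
    exact pow_lt_pow_right_of_lt_one₀ (norm_pos_iff.2 hμ0) hμ1
      (Nat.pow_lt_pow_right (by omega) hab)
  exact Set.infinite_of_injective_forall_mem hinj hiter f.finite_hasEigenvalue

end Module.End

theorem schroeder_power_no_full_rank_solution_general (n : ℕ) (hn : 1 ≤ n)
    (φ : EuclideanSpace ℂ (Fin n) → EuclideanSpace ℂ (Fin n))
    (han : AnalyticOnNhd ℂ φ (ball (0 : EuclideanSpace ℂ (Fin n)) 1))
    (hfix : φ 0 = 0)
    (hinv : Function.Bijective (fderiv ℂ φ 0))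
    (hslice : ∀ z ∈ ball (0 : EuclideanSpace ℂ (Fin n)) 1, z ≠ 0 → ‖φ z‖ < ‖z‖)
    (k : ℕ) (hk : 2 ≤ k)
    (F : EuclideanSpace ℂ (Fin n) → EuclideanSpace ℂ (Fin n))
    (hFan : AnalyticOnNhd ℂ F (ball (0 : EuclideanSpace ℂ (Fin n)) 1))
    (hFeq : ∀ z ∈ ball (0 : EuclideanSpace ℂ (Fin n)) 1, F (φ z) = ((fderiv ℂ φ 0) ^ k) (F z)) :
    ¬ Function.Bijective (fderiv ℂ F 0) := by
  intro hB
  have : Nonempty (Fin n) := ⟨⟨0, hn⟩⟩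
  set A := fderiv ℂ φ 0
  have h0 : (0 : EuclideanSpace ℂ (Fin n)) ∈ ball 0 1 := mem_ball_self one_pos
  have hconj := fderiv_comp_eq_of_eventuallyEq_comp (L := A ^ k) (han 0 h0).differentiableAt
    (hFan 0 h0).differentiableAt hfix (Filter.eventuallyEq_of_mem (isOpen_ball.mem_nhds h0) hFeq)
  have hA : ‖A‖ < 1 := norm_fderiv_lt_one_of_norm_lt_norm one_pos han.differentiableOn hfix hslice
  let A' : Module.End ℂ (EuclideanSpace ℂ (Fin n)) := A
  have hpow : ∀ μ, A'.HasEigenvalue μ → A'.HasEigenvalue (μ ^ k) := fun μ hμ ↦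
    (hμ.pow k).of_semiconj hB fun v ↦ by
      simpa [A', ← ContinuousLinearMap.toLinearMap_pow] using congr($hconj v)
  obtain ⟨μ, hμ⟩ := A'.exists_eigenvalue
  have hμ0 : μ ≠ 0 := by
    rintro rfl
    obtain ⟨v, hv⟩ := hμ.exists_hasEigenvector
    exact hv.2 (hinv.1 (by simpa [A'] using hv.apply_eq_smul))
  exact A'.not_hasEigenvalue_of_forall_pow hk hpow hμ0
    ((A.norm_le_opNorm_of_hasEigenvalue hμ).trans_lt hA) hμ

/-- Let `φ` be an analytic self-map of the open unit ball `𝔹ⁿ ⊆ ℂⁿ` with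
`φ(0) = 0`, invertible derivative `φ'(0)`, and not unitary on any slice.  If `k ≥ 2`, then
every analytic `F : 𝔹ⁿ → ℂⁿ` with `F ∘ φ = φ'(0)^k F` has singular derivative at `0`; in
particular no such `F` has full rank near `0`. -/
theorem schroeder_power_no_full_rank_solution (n : ℕ) (hn : 1 ≤ n)
    (φ : EuclideanSpace ℂ (Fin n) → EuclideanSpace ℂ (Fin n))
    (hmap : Set.MapsTo φ (ball (0 : EuclideanSpace ℂ (Fin n)) 1)
      (ball (0 : EuclideanSpace ℂ (Fin n)) 1))
    (han : AnalyticOnNhd ℂ φ (ball (0 : EuclideanSpace ℂ (Fin n)) 1))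
    (hfix : φ 0 = 0)
    (hinv : Function.Bijective (fderiv ℂ φ 0))
    (hslice : ∀ z ∈ ball (0 : EuclideanSpace ℂ (Fin n)) 1, z ≠ 0 → ‖φ z‖ < ‖z‖)
    (k : ℕ) (hk : 2 ≤ k)
    (F : EuclideanSpace ℂ (Fin n) → EuclideanSpace ℂ (Fin n))
    (hFan : AnalyticOnNhd ℂ F (ball (0 : EuclideanSpace ℂ (Fin n)) 1))
    (hFeq : ∀ z ∈ ball (0 : EuclideanSpace ℂ (Fin n)) 1, F (φ z) = ((fderiv ℂ φ 0) ^ k) (F z)) :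
    ¬ Function.Bijective (fderiv ℂ F 0) :=
  schroeder_power_no_full_rank_solution_general n hn φ han hfix hinv hslice k hk F hFan hFeq
end

section
/- Let φ : 𝔹ⁿ → 𝔹ⁿ be an analytic map, let λ ∈ ℂ with λ ≠ 0, let s ≥ 1, and let f_1, …, f_s : 𝔹ⁿ → ℂ be analytic functions that are linearly independent over ℂ and satisfy f_j ∘ φ = λ f_j + f_{j+1} for 1 ≤ j ≤ s−1 and f_s ∘ φ = λ f_s. For an integer k ≥ 1 define h_j = λ^{−(k−1)(s−j)} · f_j · f_s^{k−1} for j = 1, …, s. Then h_j ∘ φ = λ^k h_j + h_{j+1} for 1 ≤ j ≤ s−1, h_s ∘ φ = λ^k h_s, and h_1, …, h_s are linearly independent over ℂ. -/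
open Metric Set

/-! Since `f_s ∘ φ = λ f_s`, multiplying the chain relation of `f_j` by
`(f_s ∘ φ)^(k-1) = λ^(k-1) f_s^(k-1)` gives the `λ^k`-chain relation, the stray powers of `λ`
being absorbed by the normalisation of `h_j`. Linear independence survives multiplication by
`f_s^(k-1)`: this function is nonzero at some point of the connected ball, so a relation
`(∑ c_j f_j) f_s^(k-1) = 0` forces `∑ c_j f_j` to vanish near that point, hence everywhere by the
identity theorem. -/

section ZeroDivisors

variable {𝕜 E : Type*} [NontriviallyNormedField 𝕜] [NormedAddCommGroup E] [NormedSpace 𝕜 E]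
  {U : Set E}

theorem AnalyticOnNhd.eqOn_zero_of_mul_eqOn_zero {F g : E → 𝕜} (hF : AnalyticOnNhd 𝕜 F U)
    (hU : IsPreconnected U) (hUo : IsOpen U) {z₀ : E} (hz₀ : z₀ ∈ U) (hg : ContinuousAt g z₀)
    (hgz₀ : g z₀ ≠ 0) (hFg : ∀ z ∈ U, F z * g z = 0) : EqOn F 0 U := by
  refine hF.eqOn_zero_of_preconnected_of_eventuallyEq_zero hU hz₀ ?_
  filter_upwards [hg.eventually_ne hgz₀, hUo.mem_nhds hz₀] with z hgz hz
  exact (mul_eq_zero.mp (hFg z hz)).resolve_right hgz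

theorem LinearIndependent.mul_of_analyticOnNhd {ι : Type*} {f : ι → E → 𝕜}
    (hind : LinearIndependent 𝕜 fun i (z : U) => f i z) (hf : ∀ i, AnalyticOnNhd 𝕜 (f i) U)
    (hU : IsPreconnected U) (hUo : IsOpen U) {g : E → 𝕜} {z₀ : E} (hz₀ : z₀ ∈ U)
    (hg : ContinuousAt g z₀) (hgz₀ : g z₀ ≠ 0) :
    LinearIndependent 𝕜 fun i (z : U) => f i z * g z := by
  rw [linearIndependent_iff'] at hind ⊢
  intro t c hc
  have hcomb : EqOn (fun z => ∑ i ∈ t, c i * f i z) 0 U := by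
    refine AnalyticOnNhd.eqOn_zero_of_mul_eqOn_zero
      (Finset.analyticOnNhd_fun_sum _ fun i _ => analyticOnNhd_const.mul (hf i)) hU hUo hz₀
      hg hgz₀ fun z hz => ?_
    simpa [Finset.sum_mul, mul_assoc] using congrFun hc ⟨z, hz⟩
  exact hind t c (funext fun z => by simpa using hcomb z.2)

end ZeroDivisors

section Chain

variable {X 𝕜 : Type*} [Field 𝕜] {U : Set X} {φ : X → X} {lam : 𝕜} {s : ℕ} {f : Fin s → X → 𝕜}

theorem chain_last_comp_eq_mul (hs : 0 < s)
    (hchain : ∀ (j : Fin s), ∀ z ∈ U,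
      f j (φ z) = if h : (j : ℕ) + 1 < s then lam * f j z + f ⟨(j : ℕ) + 1, h⟩ z
        else lam * f j z) :
    ∀ z ∈ U, f ⟨s - 1, Nat.sub_lt hs one_pos⟩ (φ z) = lam * f ⟨s - 1, Nat.sub_lt hs one_pos⟩ z :=
  fun z hz => (hchain _ z hz).trans (dif_neg (by dsimp only; omega))

theorem chain_mul_pow_last (hs : 0 < s) (hlam : lam ≠ 0)
    (hchain : ∀ (j : Fin s), ∀ z ∈ U,
      f j (φ z) = if h : (j : ℕ) + 1 < s then lam * f j z + f ⟨(j : ℕ) + 1, h⟩ z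
        else lam * f j z)
    (m : ℕ) (h : Fin s → X → 𝕜)
    (hdef : ∀ (j : Fin s) (z : X),
      h j z = f j z * (f ⟨s - 1, Nat.sub_lt hs one_pos⟩ z) ^ m / lam ^ (m * (s - 1 - (j : ℕ))))
    (j : Fin s) (z : X) (hz : z ∈ U) :
    h j (φ z) = if hj : (j : ℕ) + 1 < s then lam ^ (m + 1) * h j z + h ⟨(j : ℕ) + 1, hj⟩ z
      else lam ^ (m + 1) * h j z := by
  simp only [hdef, chain_last_comp_eq_mul hs hchain z hz, hchain j z hz]
  split_ifs with hj
  · obtain ⟨e, he⟩ : ∃ e, s - 1 - (j : ℕ) = e + 1 := ⟨s - 1 - (j + 1), by omega⟩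
    rw [he, show s - 1 - ((j : ℕ) + 1) = e by omega]
    field_simp
    ring
  · rw [show s - 1 - (j : ℕ) = 0 by omega]
    ring

end Chain

theorem chain_power_construction_general (n : ℕ)
    (φ : EuclideanSpace ℂ (Fin n) → EuclideanSpace ℂ (Fin n))
    (lam : ℂ) (hlam : lam ≠ 0)
    (s : ℕ) (hs : 0 < s)
    (f : Fin s → EuclideanSpace ℂ (Fin n) → ℂ)
    (hfan : ∀ j, AnalyticOnNhd ℂ (f j) (ball (0 : EuclideanSpace ℂ (Fin n)) 1))
    (hfind : LinearIndependent ℂ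
      (fun j : Fin s => fun z : ball (0 : EuclideanSpace ℂ (Fin n)) 1 => f j z))
    (hchain : ∀ (j : Fin s), ∀ z ∈ ball (0 : EuclideanSpace ℂ (Fin n)) 1,
      f j (φ z) = if h : (j : ℕ) + 1 < s then lam * f j z + f ⟨(j : ℕ) + 1, h⟩ z
        else lam * f j z)
    (k : ℕ) (hk : 1 ≤ k)
    (h : Fin s → EuclideanSpace ℂ (Fin n) → ℂ)
    (hdef : ∀ (j : Fin s) (z : EuclideanSpace ℂ (Fin n)),
      h j z = f j z * (f ⟨s - 1, Nat.sub_lt hs one_pos⟩ z) ^ (k - 1) /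
        lam ^ ((k - 1) * (s - 1 - (j : ℕ)))) :
    (∀ (j : Fin s), ∀ z ∈ ball (0 : EuclideanSpace ℂ (Fin n)) 1,
      h j (φ z) = if hj : (j : ℕ) + 1 < s then lam ^ k * h j z + h ⟨(j : ℕ) + 1, hj⟩ z
        else lam ^ k * h j z) ∧
    LinearIndependent ℂ
      (fun j : Fin s => fun z : ball (0 : EuclideanSpace ℂ (Fin n)) 1 => h j z) := by
  obtain ⟨m, rfl⟩ : ∃ m, k = m + 1 := ⟨k - 1, by omega⟩
  simp only [Nat.add_sub_cancel] at hdef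
  refine ⟨chain_mul_pow_last hs hlam hchain m h hdef, ?_⟩
  set last : Fin s := ⟨s - 1, Nat.sub_lt hs one_pos⟩
  obtain ⟨⟨z₀, hz₀⟩, hlast_ne⟩ := Function.ne_iff.mp (hfind.ne_zero last)
  have hprod := hfind.mul_of_analyticOnNhd hfan (convex_ball _ _).isPreconnected isOpen_ball hz₀
    ((hfan last z₀ hz₀).pow m).continuousAt (pow_ne_zero m hlast_ne)
  have hscale : (fun j (z : ball (0 : EuclideanSpace ℂ (Fin n)) 1) => h j z) =
      (fun j : Fin s => Units.mk0 (lam ^ (m * (s - 1 - (j : ℕ))))⁻¹ (by simp [hlam])) •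
        fun j (z : ball (0 : EuclideanSpace ℂ (Fin n)) 1) => f j z * (f last ^ m) z := by
    ext j z
    simp [hdef, div_eq_inv_mul]
  exact hscale ▸ hprod.units_smul _

/-- Let `φ : 𝔹ⁿ → 𝔹ⁿ` be analytic, `λ ≠ 0`, and let `f 0, …, f (s-1)` be
linearly independent analytic functions on `𝔹ⁿ` forming a `λ`-chain under composition with `φ`:
`f j ∘ φ = λ f j + f (j+1)` for `j < s - 1` and `f (s-1) ∘ φ = λ f (s-1)`.  For `k ≥ 1`, set
`h j = λ^{-(k-1)(s-1-j)} · f j · (f (s-1))^{k-1}`.  Then the `h j` form a `λ^k`-chain under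
composition with `φ` and are linearly independent over `ℂ`. -/
theorem chain_power_construction (n : ℕ) (hn : 1 ≤ n)
    (φ : EuclideanSpace ℂ (Fin n) → EuclideanSpace ℂ (Fin n))
    (hmap : Set.MapsTo φ (ball (0 : EuclideanSpace ℂ (Fin n)) 1)
      (ball (0 : EuclideanSpace ℂ (Fin n)) 1))
    (han : AnalyticOnNhd ℂ φ (ball (0 : EuclideanSpace ℂ (Fin n)) 1))
    (lam : ℂ) (hlam : lam ≠ 0)
    (s : ℕ) (hs : 0 < s)
    (f : Fin s → EuclideanSpace ℂ (Fin n) → ℂ)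
    (hfan : ∀ j, AnalyticOnNhd ℂ (f j) (ball (0 : EuclideanSpace ℂ (Fin n)) 1))
    (hfind : LinearIndependent ℂ
      (fun j : Fin s => fun z : ball (0 : EuclideanSpace ℂ (Fin n)) 1 => f j z))
    (hchain : ∀ (j : Fin s), ∀ z ∈ ball (0 : EuclideanSpace ℂ (Fin n)) 1,
      f j (φ z) = if h : (j : ℕ) + 1 < s then lam * f j z + f ⟨(j : ℕ) + 1, h⟩ z
        else lam * f j z)
    (k : ℕ) (hk : 1 ≤ k)
    (h : Fin s → EuclideanSpace ℂ (Fin n) → ℂ)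
    (hdef : ∀ (j : Fin s) (z : EuclideanSpace ℂ (Fin n)),
      h j z = f j z * (f ⟨s - 1, Nat.sub_lt hs one_pos⟩ z) ^ (k - 1) /
        lam ^ ((k - 1) * (s - 1 - (j : ℕ)))) :
    (∀ (j : Fin s), ∀ z ∈ ball (0 : EuclideanSpace ℂ (Fin n)) 1,
      h j (φ z) = if hj : (j : ℕ) + 1 < s then lam ^ k * h j z + h ⟨(j : ℕ) + 1, hj⟩ z
        else lam ^ k * h j z) ∧
    LinearIndependent ℂ
      (fun j : Fin s => fun z : ball (0 : EuclideanSpace ℂ (Fin n)) 1 => h j z) :=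
  chain_power_construction_general n φ lam hlam s hs f hfan hfind hchain k hk h hdef
end
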